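/- arXiv:2105.02266 — 4 statements merged into one kernel-verified Lean document; each statement's English description precedes it below -/
import Mathlib

section
/- Let V, V' be matrices with ‖V‖ ≤ C_g and ‖V'‖ ≤ C_g, let H, H' be symmetric matrices with H ⪰ λI, H' ⪰ λI (λ > 0), and let v, v' be vectors with ‖v‖ ≤ C_f, ‖v'‖ ≤ C_f. Then ‖V H⁻¹ v - V' (H')⁻¹ v'‖² ≤ 3(C_f²/λ²)‖V - V'‖² + 3(C_f² C_g²/λ⁴)‖H - H'‖² + 3(C_g²/λ²)‖v - v'‖². -/
/-!
Telescope `V H⁻¹ v - V' H'⁻¹ v' = (V - V') H⁻¹ v + V' (H⁻¹ - H'⁻¹) v + V' H'⁻¹ (v - v')` and use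
`H⁻¹ - H'⁻¹ = H⁻¹ (H' - H) H'⁻¹`. Coercivity `λ‖x‖² ≤ ⟪H x, x⟫` makes `H` invertible with
`‖H⁻¹‖ ≤ 1/λ`, which bounds each term; squaring uses `(a + b + c)² ≤ 3(a² + b² + c²)`.
-/

open ContinuousLinearMap

section Coercive

variable {E : Type*} [NormedAddCommGroup E] [InnerProductSpace ℝ E] {lam : ℝ} {H : E →L[ℝ] E}

theorem mul_norm_le_norm_apply_of_coercive (hHc : ∀ x, lam * ‖x‖ ^ 2 ≤ inner ℝ (H x) x) (x : E) :
    lam * ‖x‖ ≤ ‖H x‖ := by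
  rcases (norm_nonneg x).eq_or_lt with hx | hx
  · simp [← hx]
  · refine le_of_mul_le_mul_right ?_ hx
    calc lam * ‖x‖ * ‖x‖ = lam * ‖x‖ ^ 2 := by ring
      _ ≤ inner ℝ (H x) x := hHc x
      _ ≤ ‖H x‖ * ‖x‖ := real_inner_le_norm _ _

theorem isUnit_of_coercive [CompleteSpace E] (hlam : 0 < lam)
    (hHc : ∀ x, lam * ‖x‖ ^ 2 ≤ inner ℝ (H x) x) : IsUnit H :=
  isUnit_of_forall_le_norm_inner_map H (c := ⟨lam, hlam.le⟩) hlam fun x =>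
    (mul_comm lam _ ▸ hHc x).trans (Real.le_norm_self _)

theorem norm_inverse_le_of_coercive [CompleteSpace E] (hlam : 0 < lam)
    (hHc : ∀ x, lam * ‖x‖ ^ 2 ≤ inner ℝ (H x) x) : ‖Ring.inverse H‖ ≤ lam⁻¹ := by
  refine opNorm_le_bound _ (inv_nonneg.mpr hlam.le) fun y => ?_
  have hy : H (Ring.inverse H y) = y :=
    DFunLike.congr_fun (Ring.mul_inverse_cancel H (isUnit_of_coercive hlam hHc)) y
  rw [inv_mul_eq_div, le_div_iff₀ hlam, mul_comm]
  simpa only [hy] using mul_norm_le_norm_apply_of_coercive hHc (Ring.inverse H y)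

end Coercive

theorem norm_apply_inverse_sub_apply_inverse_le {𝕜 E F : Type*} [NontriviallyNormedField 𝕜]
    [NormedAddCommGroup E] [NormedSpace 𝕜 E] [NormedAddCommGroup F] [NormedSpace 𝕜 F]
    {K Cf Cg : ℝ} {V V' : E →L[𝕜] F} {H H' : E →L[𝕜] E} {v v' : E}
    (hH : IsUnit H) (hH' : IsUnit H') (hHi : ‖Ring.inverse H‖ ≤ K) (hHi' : ‖Ring.inverse H'‖ ≤ K)
    (hV' : ‖V'‖ ≤ Cg) (hv : ‖v‖ ≤ Cf) :
    ‖V (Ring.inverse H v) - V' (Ring.inverse H' v')‖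
      ≤ K * Cf * ‖V - V'‖ + Cg * K ^ 2 * Cf * ‖H - H'‖ + Cg * K * ‖v - v'‖ := by
  set Hi := Ring.inverse H
  set Hi' := Ring.inverse H'
  have hK : 0 ≤ K := (norm_nonneg _).trans hHi
  have hCg : 0 ≤ Cg := (norm_nonneg _).trans hV'
  have hCf : 0 ≤ Cf := (norm_nonneg _).trans hv
  have hsplit : V (Hi v) - V' (Hi' v')
      = (V - V') (Hi v) + V' ((Hi - Hi') v) + V' (Hi' (v - v')) := by
    simp only [sub_apply, map_sub]
    abel
  have hdiff : ‖Hi - Hi'‖ ≤ K ^ 2 * ‖H - H'‖ :=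
    calc ‖Hi - Hi'‖ = ‖Hi * (H' - H) * Hi'‖ := by rw [Ring.inverse_sub_inverse (iff_of_true hH hH')]
      _ ≤ ‖Hi‖ * ‖H' - H‖ * ‖Hi'‖ := norm_mul₃_le
      _ ≤ K * ‖H - H'‖ * K := by rw [norm_sub_rev]; gcongr
      _ = K ^ 2 * ‖H - H'‖ := by ring
  rw [hsplit]
  calc _ ≤ ‖(V - V') (Hi v)‖ + ‖V' ((Hi - Hi') v)‖ + ‖V' (Hi' (v - v'))‖ := norm_add₃_le
    _ ≤ ‖V - V'‖ * (‖Hi‖ * ‖v‖) + ‖V'‖ * (‖Hi - Hi'‖ * ‖v‖) + ‖V'‖ * (‖Hi'‖ * ‖v - v'‖) := by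
        gcongr <;> exact le_opNorm_of_le _ (le_opNorm _ _)
    _ ≤ ‖V - V'‖ * (K * Cf) + Cg * (K ^ 2 * ‖H - H'‖ * Cf) + Cg * (K * ‖v - v'‖) := by gcongr
    _ = _ := by ring

theorem sq_add_add_le_three_mul (a b c : ℝ) : (a + b + c) ^ 2 ≤ 3 * (a ^ 2 + b ^ 2 + c ^ 2) := by
  nlinarith [sq_nonneg (a - b), sq_nonneg (b - c), sq_nonneg (a - c)]

theorem stmt5_general {d d' : ℕ} (lam Cf Cg : ℝ) (hlam : 0 < lam)
    (V V' : EuclideanSpace ℝ (Fin d') →L[ℝ] EuclideanSpace ℝ (Fin d))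
    (H H' : EuclideanSpace ℝ (Fin d') →L[ℝ] EuclideanSpace ℝ (Fin d'))
    (v v' : EuclideanSpace ℝ (Fin d'))
    (hV' : ‖V'‖ ≤ Cg)
    (hHc : ∀ x, lam * ‖x‖ ^ 2 ≤ (inner ℝ (H x) x : ℝ))
    (hH'c : ∀ x, lam * ‖x‖ ^ 2 ≤ (inner ℝ (H' x) x : ℝ))
    (hv : ‖v‖ ≤ Cf) :
    ‖V (Ring.inverse H v) - V' (Ring.inverse H' v')‖ ^ 2
      ≤ 3 * (Cf ^ 2 / lam ^ 2) * ‖V - V'‖ ^ 2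
        + 3 * (Cf ^ 2 * Cg ^ 2 / lam ^ 4) * ‖H - H'‖ ^ 2
        + 3 * (Cg ^ 2 / lam ^ 2) * ‖v - v'‖ ^ 2 := by
  have hbound := norm_apply_inverse_sub_apply_inverse_le (V := V) (v' := v')
    (isUnit_of_coercive hlam hHc) (isUnit_of_coercive hlam hH'c)
    (norm_inverse_le_of_coercive hlam hHc) (norm_inverse_le_of_coercive hlam hH'c) hV' hv
  calc _ ≤ (lam⁻¹ * Cf * ‖V - V'‖ + Cg * lam⁻¹ ^ 2 * Cf * ‖H - H'‖ + Cg * lam⁻¹ * ‖v - v'‖) ^ 2 :=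
        pow_le_pow_left₀ (norm_nonneg _) hbound 2
    _ ≤ _ := sq_add_add_le_three_mul _ _ _
    _ = _ := by field_simp

/-- Three-term bound for differences of products `V H⁻¹ v` with bounded factors and `H ⪰ λI`. -/
theorem stmt5 {d d' : ℕ} (lam Cf Cg : ℝ) (hlam : 0 < lam)
    (V V' : EuclideanSpace ℝ (Fin d') →L[ℝ] EuclideanSpace ℝ (Fin d))
    (H H' : EuclideanSpace ℝ (Fin d') →L[ℝ] EuclideanSpace ℝ (Fin d'))
    (v v' : EuclideanSpace ℝ (Fin d'))
    (hV : ‖V‖ ≤ Cg) (hV' : ‖V'‖ ≤ Cg)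
    (hHsa : IsSelfAdjoint H) (hH'sa : IsSelfAdjoint H')
    (hHc : ∀ x, lam * ‖x‖ ^ 2 ≤ (inner ℝ (H x) x : ℝ))
    (hH'c : ∀ x, lam * ‖x‖ ^ 2 ≤ (inner ℝ (H' x) x : ℝ))
    (hv : ‖v‖ ≤ Cf) (hv' : ‖v'‖ ≤ Cf) :
    ‖V (Ring.inverse H v) - V' (Ring.inverse H' v')‖ ^ 2
      ≤ 3 * (Cf ^ 2 / lam ^ 2) * ‖V - V'‖ ^ 2
        + 3 * (Cf ^ 2 * Cg ^ 2 / lam ^ 4) * ‖H - H'‖ ^ 2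
        + 3 * (Cg ^ 2 / lam ^ 2) * ‖v - v'‖ ^ 2 :=
  stmt5_general lam Cf Cg hlam V V' H H' v v' hV' hHc hH'c hv
end

section
/- Let h : ℝ^d → ℝ^{d'} be an L-Lipschitz map, and suppose for each t a random variable ξ_t gives an unbiased estimator h(e;ξ_t) of h(e) with E‖h(e;ξ_t) - h(e)‖² ≤ σ² for all e, and ξ_t is independent of (e_{t-1}, e_t, ĥ_t). Define ĥ_{t+1} = (1-β_t)(ĥ_t - h(e_{t-1};ξ_t)) + h(e_t;ξ_t) with β_t ∈ [0,1]. Then E_t[‖ĥ_{t+1} - h(e_t)‖²] ≤ (1-β_t)‖ĥ_t - h(e_{t-1})‖² + 2β_t²σ² + 2L²‖e_t - e_{t-1}‖². -/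
/-!
Write the new error as `(1 - β) • (ĥ - h e₀) + X` with
`X = (1 - β) • D + β • G`, where `D = (H e₁ - H e₀) - (h e₁ - h e₀)` and `G = H e₁ - h e₁`
are centred. Since `X` has mean zero, the second moment splits as
`(1 - β)² ‖ĥ - h e₀‖² + E‖X‖²`, and `E‖X‖² ≤ 2(1 - β)² E‖D‖² + 2β² E‖G‖²`.
Centring only lowers the second moment, so `E‖D‖² ≤ L² ‖e₁ - e₀‖²` by the samplewise
Lipschitz bound, while `E‖G‖² ≤ σ²`. Finally `(1 - β)² ≤ 1 - β ≤ 1`.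
-/

open MeasureTheory

lemma norm_add_sq_le {G : Type*} [SeminormedAddCommGroup G] (u v : G) :
    ‖u + v‖ ^ 2 ≤ 2 * (‖u‖ ^ 2 + ‖v‖ ^ 2) :=
  (pow_le_pow_left₀ (norm_nonneg _) (norm_add_le u v) 2).trans add_sq_le

lemma integral_norm_smul_add_smul_sq_le {F W : Type*} [NormedAddCommGroup F] [NormedSpace ℝ F]
    [MeasurableSpace W] {μ : Measure W} {u v : W → F} (hu : MemLp u 2 μ) (hv : MemLp v 2 μ)
    (a b : ℝ) :
    ∫ ω, ‖a • u ω + b • v ω‖ ^ 2 ∂μ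
      ≤ 2 * a ^ 2 * ∫ ω, ‖u ω‖ ^ 2 ∂μ + 2 * b ^ 2 * ∫ ω, ‖v ω‖ ^ 2 ∂μ := by
  have hu2 := hu.norm.integrable_sq.const_mul (2 * a ^ 2)
  have hv2 := hv.norm.integrable_sq.const_mul (2 * b ^ 2)
  rw [← integral_const_mul, ← integral_const_mul, ← integral_add hu2 hv2]
  refine integral_mono ((hu.const_smul a).add (hv.const_smul b)).norm.integrable_sq
    (hu2.add hv2) fun ω => ?_
  calc ‖a • u ω + b • v ω‖ ^ 2 ≤ 2 * (‖a • u ω‖ ^ 2 + ‖b • v ω‖ ^ 2) := norm_add_sq_le _ _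
    _ = 2 * a ^ 2 * ‖u ω‖ ^ 2 + 2 * b ^ 2 * ‖v ω‖ ^ 2 := by
      simp only [norm_smul, mul_pow, Real.norm_eq_abs, sq_abs]; ring

lemma integral_sub_eq_zero_of_integral_eq {F W : Type*} [NormedAddCommGroup F]
    [NormedSpace ℝ F] [CompleteSpace F] [MeasurableSpace W] {μ : Measure W}
    [IsProbabilityMeasure μ] {f : W → F} {m : F} (hf : Integrable f μ)
    (hm : ∫ ω, f ω ∂μ = m) : ∫ ω, (f ω - m) ∂μ = 0 := by
  rw [integral_sub hf (integrable_const _), integral_const, probReal_univ, one_smul, hm, sub_self]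

section SecondMoment

variable {F W : Type*} [NormedAddCommGroup F] [InnerProductSpace ℝ F] [CompleteSpace F]
  [MeasurableSpace W] {μ : Measure W} [IsProbabilityMeasure μ] {f : W → F}

lemma integral_norm_const_add_sq (a : F) (hf : MemLp f 2 μ) :
    ∫ ω, ‖a + f ω‖ ^ 2 ∂μ = ‖a‖ ^ 2 + 2 * inner ℝ a (∫ ω, f ω ∂μ) + ∫ ω, ‖f ω‖ ^ 2 ∂μ := by
  have hinner : Integrable (fun ω => 2 * inner ℝ a (f ω)) μ :=
    ((hf.integrable one_le_two).const_inner a).const_mul 2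
  have hsum : Integrable (fun ω => 2 * inner ℝ a (f ω) + ‖f ω‖ ^ 2) μ :=
    hinner.add hf.norm.integrable_sq
  calc ∫ ω, ‖a + f ω‖ ^ 2 ∂μ = ∫ ω, (‖a‖ ^ 2 + (2 * inner ℝ a (f ω) + ‖f ω‖ ^ 2)) ∂μ := by
        congr 1; funext ω; rw [norm_add_sq_real]; ring
    _ = ‖a‖ ^ 2 + 2 * inner ℝ a (∫ ω, f ω ∂μ) + ∫ ω, ‖f ω‖ ^ 2 ∂μ := by
        rw [integral_add (integrable_const _) hsum,
          integral_add hinner hf.norm.integrable_sq, integral_const, integral_const_mul,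
          integral_inner (hf.integrable one_le_two), probReal_univ, one_smul, add_assoc]

lemma integral_norm_const_add_sq_of_integral_eq_zero (a : F) (hf : MemLp f 2 μ)
    (hf0 : ∫ ω, f ω ∂μ = 0) :
    ∫ ω, ‖a + f ω‖ ^ 2 ∂μ = ‖a‖ ^ 2 + ∫ ω, ‖f ω‖ ^ 2 ∂μ := by
  rw [integral_norm_const_add_sq a hf, hf0, inner_zero_right, mul_zero, add_zero]

lemma integral_norm_sub_integral_sq (hf : MemLp f 2 μ) :
    ∫ ω, ‖f ω - ∫ ω', f ω' ∂μ‖ ^ 2 ∂μ = ∫ ω, ‖f ω‖ ^ 2 ∂μ - ‖∫ ω, f ω ∂μ‖ ^ 2 := by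
  have := integral_norm_const_add_sq (-∫ ω, f ω ∂μ) hf
  simp only [neg_add_eq_sub, norm_neg, inner_neg_left, real_inner_self_eq_norm_sq] at this
  rw [this]; ring

lemma integral_norm_sub_sq_le_of_norm_le {m : F} {C : ℝ} (hf : MemLp f 2 μ)
    (hm : ∫ ω, f ω ∂μ = m) (hC : ∀ ω, ‖f ω‖ ≤ C) :
    ∫ ω, ‖f ω - m‖ ^ 2 ∂μ ≤ C ^ 2 := by
  have hbound : ∫ ω, ‖f ω‖ ^ 2 ∂μ ≤ C ^ 2 := by
    simpa using integral_mono hf.norm.integrable_sq (integrable_const (C ^ 2))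
      fun ω => pow_le_pow_left₀ (norm_nonneg _) (hC ω) 2
  rw [← hm, integral_norm_sub_integral_sq hf]
  linarith [sq_nonneg ‖∫ ω, f ω ∂μ‖]

lemma integral_norm_const_add_smul_add_smul_sq_le (a : F) (b c : ℝ) {u v : W → F}
    (hu : MemLp u 2 μ) (hv : MemLp v 2 μ) (hu0 : ∫ ω, u ω ∂μ = 0) (hv0 : ∫ ω, v ω ∂μ = 0) :
    ∫ ω, ‖a + (b • u ω + c • v ω)‖ ^ 2 ∂μ
      ≤ ‖a‖ ^ 2 + 2 * b ^ 2 * ∫ ω, ‖u ω‖ ^ 2 ∂μ + 2 * c ^ 2 * ∫ ω, ‖v ω‖ ^ 2 ∂μ := by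
  have hbu : Integrable (fun ω => b • u ω) μ := (hu.integrable one_le_two).smul b
  have hcv : Integrable (fun ω => c • v ω) μ := (hv.integrable one_le_two).smul c
  have hmean : ∫ ω, (b • u ω + c • v ω) ∂μ = 0 := by
    rw [integral_add hbu hcv, integral_smul, integral_smul, hu0, hv0, smul_zero, smul_zero,
      add_zero]
  have hX : MemLp (fun ω => b • u ω + c • v ω) 2 μ := (hu.const_smul b).add (hv.const_smul c)
  rw [integral_norm_const_add_sq_of_integral_eq_zero a hX hmean, add_assoc]
  exact add_le_add_right (integral_norm_smul_add_smul_sq_le hu hv b c) _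

end SecondMoment

/-- STORM variance-reduction recursion (one step, unprojected). -/
theorem stmt8 {E F W : Type*} [NormedAddCommGroup E]
    [NormedAddCommGroup F] [InnerProductSpace ℝ F] [CompleteSpace F]
    [MeasurableSpace W] (μ : Measure W) [IsProbabilityMeasure μ]
    (h : E → F) (H : E → W → F) (L σ β : ℝ)
    (hβ0 : 0 ≤ β) (hβ1 : β ≤ 1)
    (hmem : ∀ e, MemLp (H e) 2 μ)
    (hunbiased : ∀ e, ∫ ω, H e ω ∂μ = h e)
    (hvar : ∀ e, ∫ ω, ‖H e ω - h e‖ ^ 2 ∂μ ≤ σ ^ 2)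
    (hlip : ∀ ω e e', ‖H e ω - H e' ω‖ ≤ L * ‖e - e'‖)
    (e₀ e₁ : E) (hhat : F) :
    ∫ ω, ‖((1 - β) • (hhat - H e₀ ω) + H e₁ ω) - h e₁‖ ^ 2 ∂μ
      ≤ (1 - β) * ‖hhat - h e₀‖ ^ 2 + 2 * β ^ 2 * σ ^ 2 + 2 * L ^ 2 * ‖e₁ - e₀‖ ^ 2 := by
  have hΔ : MemLp (fun ω => H e₁ ω - H e₀ ω) 2 μ := (hmem e₁).sub (hmem e₀)
  have hΔmean : ∫ ω, (H e₁ ω - H e₀ ω) ∂μ = h e₁ - h e₀ := by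
    rw [integral_sub ((hmem e₁).integrable one_le_two) ((hmem e₀).integrable one_le_two),
      hunbiased, hunbiased]
  set D : W → F := fun ω => (H e₁ ω - H e₀ ω) - (h e₁ - h e₀)
  set G : W → F := fun ω => H e₁ ω - h e₁
  have hD : MemLp D 2 μ := hΔ.sub (memLp_const _)
  have hG : MemLp G 2 μ := (hmem e₁).sub (memLp_const _)
  have hD0 : ∫ ω, D ω ∂μ = 0 :=
    integral_sub_eq_zero_of_integral_eq (hΔ.integrable one_le_two) hΔmean
  have hG0 : ∫ ω, G ω ∂μ = 0 :=
    integral_sub_eq_zero_of_integral_eq ((hmem e₁).integrable one_le_two) (hunbiased e₁)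
  have hDsq : ∫ ω, ‖D ω‖ ^ 2 ∂μ ≤ (L * ‖e₁ - e₀‖) ^ 2 :=
    integral_norm_sub_sq_le_of_norm_le hΔ hΔmean fun ω => hlip ω e₁ e₀
  have hsplit : ∀ ω, ((1 - β) • (hhat - H e₀ ω) + H e₁ ω) - h e₁
      = (1 - β) • (hhat - h e₀) + ((1 - β) • D ω + β • G ω) := fun ω => by
    simp only [D, G]; module
  simp_rw [hsplit]
  refine (integral_norm_const_add_smul_add_smul_sq_le _ (1 - β) β hD hG hD0 hG0).trans ?_
  rw [norm_smul, Real.norm_eq_abs, mul_pow, sq_abs]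
  have hβsq : (1 - β) ^ 2 ≤ 1 - β := by nlinarith
  have hβsq' : (1 - β) ^ 2 ≤ 1 := by nlinarith
  calc (1 - β) ^ 2 * ‖hhat - h e₀‖ ^ 2 + 2 * (1 - β) ^ 2 * ∫ ω, ‖D ω‖ ^ 2 ∂μ
        + 2 * β ^ 2 * ∫ ω, ‖G ω‖ ^ 2 ∂μ
      ≤ (1 - β) * ‖hhat - h e₀‖ ^ 2 + 2 * 1 * (L * ‖e₁ - e₀‖) ^ 2 + 2 * β ^ 2 * σ ^ 2 := by
        gcongr ?_ * _ + 2 * ?_ * ?_ + _ * ?_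
        · exact hvar e₁
    _ = _ := by ring
end

section
/- Let g(x,·) be λ-strongly convex and L_g-smooth in y with minimizer y*(x), and assume y*(·) is L_y-Lipschitz. Let y_{t+1} = y_t - τ_t τ w with τ ≤ 2/(3L_g), τ_t ≤ 1/2, and x_{t+1} = x_t - γη_t z. Then ‖y_{t+1} - y*(x_{t+1})‖² ≤ (1 - τ_tτλ/4)‖y_t - y*(x_t)‖² + (8τ_tτ/λ)‖∇_y g(x_t,y_t) - w‖² + (8L_y²γ²η_t²/(τ_tτλ))‖z‖² - (1 + τ_tτλ/4)(2τ/τ_t)(1/(2τ) - 3L_g/4)‖y_t - y_{t+1}‖². -/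
/-!
Strong convexity at `y*(x_t)`, smoothness along `-τ w` and minimality of `y*(x_t)` bound
`⟪∇_y g(x_t, y_t), y_t - y*(x_t)⟫` from below, so one inexact gradient step contracts the distance
to the *current* minimizer, the error `∇_y g - w` being absorbed by two Young inequalities. The
minimizer then moves by at most `L_y γ η_t ‖z‖`, and the weighted Young inequality
`‖u + v‖² ≤ (1 + c)‖u‖² + (1 + c⁻¹)‖v‖²` with `c = τ_t τ λ / 4` pays for this drift with half of
the contraction.
-/

theorem norm_add_sq_le_weighted {F : Type*} [SeminormedAddCommGroup F] {ε : ℝ} (hε : 0 < ε)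
    (u v : F) : ‖u + v‖ ^ 2 ≤ (1 + ε) * ‖u‖ ^ 2 + (1 + ε⁻¹) * ‖v‖ ^ 2 :=
  calc ‖u + v‖ ^ 2 ≤ (‖u‖ + ‖v‖) ^ 2 := by gcongr; exact norm_add_le u v
    _ ≤ _ := by linear_combination two_mul_le_add_mul_sq (a := ‖u‖) (b := ‖v‖) hε

theorem norm_sub_sq_le_of_contraction_of_target_drift {F : Type*} [SeminormedAddCommGroup F]
    {p q q' : F} {c A B N D : ℝ} (hc : 0 < c) (hc1 : c ≤ 1) (hA : 0 ≤ A) (hB : 0 ≤ B)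
    (hstep : ‖p - q‖ ^ 2 ≤ (1 - 2 * c) * A + B - N) (hdrift : ‖q - q'‖ ^ 2 ≤ D) :
    ‖p - q'‖ ^ 2 ≤ (1 - c) * A + 2 * B + 2 * c⁻¹ * D - (1 + c) * N := by
  have hinv : 1 + c⁻¹ ≤ 2 * c⁻¹ := by linarith [one_le_inv_iff₀.mpr ⟨hc, hc1⟩]
  calc ‖p - q'‖ ^ 2 ≤ (1 + c) * ‖p - q‖ ^ 2 + (1 + c⁻¹) * ‖q - q'‖ ^ 2 := by
        simpa using norm_add_sq_le_weighted hc (p - q) (q - q')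
    _ ≤ (1 + c) * ((1 - 2 * c) * A + B - N) + 2 * c⁻¹ * D := by gcongr
    _ ≤ _ := by linear_combination (2 * c ^ 2) * hA + (1 - c) * hB

theorem norm_apply_sub_apply_sub_smul_sq_le {E F : Type*} [SeminormedAddCommGroup E]
    [NormedSpace ℝ E] [SeminormedAddCommGroup F] {φ : E → F} {K : ℝ} {x : E}
    (hφ : ∀ x', ‖φ x - φ x'‖ ≤ K * ‖x - x'‖) (a : ℝ) (z : E) :
    ‖φ x - φ (x - a • z)‖ ^ 2 ≤ (K * a) ^ 2 * ‖z‖ ^ 2 := by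
  have h := hφ (x - a • z)
  rw [sub_sub_cancel, norm_smul, Real.norm_eq_abs] at h
  calc ‖φ x - φ (x - a • z)‖ ^ 2 ≤ (K * (|a| * ‖z‖)) ^ 2 := by gcongr
    _ = (K * a) ^ 2 * ‖z‖ ^ 2 := by rw [mul_pow, mul_pow, sq_abs]; ring

section

variable {F : Type*} [NormedAddCommGroup F] [InnerProductSpace ℝ F]

open RealInnerProductSpace

theorem le_inner_sub_minimizer {f : F → ℝ} {G y ystar : F} {lam L : ℝ}
    (hstrong : ∀ y', f y + ⟪G, y' - y⟫ + lam / 2 * ‖y' - y‖ ^ 2 ≤ f y')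
    (hsmooth : ∀ y', f y' ≤ f y + ⟪G, y' - y⟫ + L / 2 * ‖y' - y‖ ^ 2)
    (hmin : ∀ y', f ystar ≤ f y') (u : F) :
    lam / 2 * ‖y - ystar‖ ^ 2 + ⟪G, u⟫ - L / 2 * ‖u‖ ^ 2 ≤ ⟪G, y - ystar⟫ := by
  have h1 := hstrong ystar
  have h2 := hsmooth (y - u)
  have h3 := hmin (y - u)
  rw [← neg_sub y ystar, inner_neg_right, norm_neg] at h1
  rw [sub_sub_cancel_left, inner_neg_right, norm_neg] at h2
  linarith

theorem norm_inexact_gradient_step_sub_minimizer_sq_le {f : F → ℝ} {G y ystar w : F}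
    {lam L τ s : ℝ} (hlam : 0 < lam) (hlamL : lam ≤ L) (hs : 0 < s) (hsτ : s ≤ τ)
    (hstrong : ∀ y', f y + ⟪G, y' - y⟫ + lam / 2 * ‖y' - y‖ ^ 2 ≤ f y')
    (hsmooth : ∀ y', f y' ≤ f y + ⟪G, y' - y⟫ + L / 2 * ‖y' - y‖ ^ 2)
    (hmin : ∀ y', f ystar ≤ f y') :
    ‖y - s • w - ystar‖ ^ 2
      ≤ (1 - s * lam / 2) * ‖y - ystar‖ ^ 2 + 4 * s / lam * ‖G - w‖ ^ 2
        - s * τ * (1 - 3 / 2 * L * τ) * ‖w‖ ^ 2 := by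
  set d := y - ystar
  have hgrad : lam / 2 * ‖d‖ ^ 2 + τ * ⟪G, w⟫ - L / 2 * τ ^ 2 * ‖w‖ ^ 2 ≤ ⟪G, d⟫ := by
    have h := le_inner_sub_minimizer hstrong hsmooth hmin (τ • w)
    rw [real_inner_smul_right, norm_smul, mul_pow, Real.norm_eq_abs, sq_abs] at h
    linarith
  have hGw : ‖w‖ ^ 2 - ‖G - w‖ * ‖w‖ ≤ ⟪G, w⟫ := by
    have h := neg_le_of_abs_le (abs_real_inner_le_norm (G - w) w)
    rw [inner_sub_left, real_inner_self_eq_norm_sq] at h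
    linarith
  have hdw : ⟪G, d⟫ - ‖d‖ * ‖G - w‖ ≤ ⟪d, w⟫ := by
    have h := real_inner_le_norm d (G - w)
    rw [inner_sub_right, real_inner_comm] at h
    linarith
  have hexp : ‖d - s • w‖ ^ 2 = ‖d‖ ^ 2 - 2 * s * ⟪d, w⟫ + s ^ 2 * ‖w‖ ^ 2 := by
    rw [norm_sub_sq_real, real_inner_smul_right, norm_smul, mul_pow, Real.norm_eq_abs, sq_abs]
    ring
  have hyoung₁ := two_mul_le_add_mul_sq (a := ‖d‖) (b := ‖G - w‖) (half_pos hlam)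
  have hyoung₂ := two_mul_le_add_mul_sq (a := τ * ‖w‖) (b := ‖G - w‖) (half_pos hlam)
  have hτ : 0 ≤ τ := hs.le.trans hsτ
  rw [sub_right_comm, hexp]
  linear_combination 2 * s * hdw + 2 * s * hgrad + 2 * s * τ * hGw + s * hyoung₁ + s * hyoung₂
    + s * ‖w‖ ^ 2 * hsτ + s * τ ^ 2 * ‖w‖ ^ 2 / 2 * hlamL

end

/-- Lemma 3 of the paper: tracking error of the lower-level iterate under the update
`y_{t+1} = y_t - τ_t τ w`, `x_{t+1} = x_t - γ η_t z`. -/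
theorem stmt13 {E E' : Type*} [NormedAddCommGroup E] [InnerProductSpace ℝ E]
    [NormedAddCommGroup E'] [InnerProductSpace ℝ E']
    (g : E → E' → ℝ) (gy : E → E' → E') (ystar : E → E')
    (lam Lg Ly τ τt γ ηt : ℝ)
    (hlam : 0 < lam) (hlamLg : lam ≤ Lg)
    (hstrong : ∀ x y y', g x y + (inner ℝ (gy x y) (y' - y) : ℝ)
      + lam / 2 * ‖y' - y‖ ^ 2 ≤ g x y')
    (hsmooth : ∀ x y y', g x y' ≤ g x y + (inner ℝ (gy x y) (y' - y) : ℝ)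
      + Lg / 2 * ‖y' - y‖ ^ 2)
    (hmin : ∀ x y, g x (ystar x) ≤ g x y)
    (hylip : ∀ x x', ‖ystar x - ystar x'‖ ≤ Ly * ‖x - x'‖)
    (hτ : 0 < τ) (hτLg : τ ≤ 2 / (3 * Lg)) (hτt : 0 < τt) (hτt2 : τt ≤ 1 / 2)
    (xt : E) (yt : E') (w : E') (z : E)
    (yt1 : E') (hyt1 : yt1 = yt - (τt * τ) • w)
    (xt1 : E) (hxt1 : xt1 = xt - (γ * ηt) • z) :
    ‖yt1 - ystar xt1‖ ^ 2
      ≤ (1 - τt * τ * lam / 4) * ‖yt - ystar xt‖ ^ 2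
        + (8 * τt * τ / lam) * ‖gy xt yt - w‖ ^ 2
        + (8 * Ly ^ 2 * γ ^ 2 * ηt ^ 2 / (τt * τ * lam)) * ‖z‖ ^ 2
        - (1 + τt * τ * lam / 4) * (2 * τ / τt) * (1 / (2 * τ) - 3 * Lg / 4)
          * ‖yt - yt1‖ ^ 2 := by
  have hs : 0 < τt * τ := mul_pos hτt hτ
  have hc : 0 < τt * τ * lam / 4 := by positivity
  have hc1 : τt * τ * lam / 4 ≤ 1 := by
    rw [le_div_iff₀ (by linarith)] at hτLg
    nlinarith [mul_le_mul_of_nonneg_left hlamLg hτ.le]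
  have hstep : ‖yt1 - ystar xt‖ ^ 2 ≤ (1 - 2 * (τt * τ * lam / 4)) * ‖yt - ystar xt‖ ^ 2
      + 4 * (τt * τ) / lam * ‖gy xt yt - w‖ ^ 2
      - τt * τ * τ * (1 - 3 / 2 * Lg * τ) * ‖w‖ ^ 2 := by
    rw [hyt1]
    linear_combination norm_inexact_gradient_step_sub_minimizer_sq_le (w := w) (τ := τ) hlam hlamLg hs
      (by nlinarith) (hstrong xt yt) (hsmooth xt yt) (hmin xt)
  have hdrift := norm_apply_sub_apply_sub_smul_sq_le (hylip xt) (γ * ηt) z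
  rw [← hxt1] at hdrift
  have hyy : ‖yt - yt1‖ ^ 2 = (τt * τ) ^ 2 * ‖w‖ ^ 2 := by
    rw [hyt1, sub_sub_cancel, norm_smul, mul_pow, Real.norm_eq_abs, sq_abs]
  calc ‖yt1 - ystar xt1‖ ^ 2 ≤ _ :=
        norm_sub_sq_le_of_contraction_of_target_drift hc hc1 (by positivity) (by positivity)
          hstep hdrift
    _ = _ := by
        rw [hyy]
        field_simp
        ring
end

section
/- In the setting of the randomized-coordinate STORM update u_{t+1} = Π_Ω[(1-β_t)(u_t - h̃(e_{t-1};ξ_t,i_t)) + h̃(e_t;ξ_t,i_t)] with β_t ∈ [0,1], where each h_i is L_i-Lipschitz with E‖h_i(e;ξ)‖² ≤ C_i², and defining C(p)=Σᵢ C_i²/p_i, L(p)=Σᵢ L_i²/p_i, δ_t = ‖u_{t+1} - h(e_t)‖² with h(e)=(h_1(e),…,h_m(e)) ∈ Ω: E_{ξ_t,i_t}[δ_t] ≤ (1-β_t)δ_{t-1} + 2β_t² C(p) + 2L(p)‖e_t - e_{t-1}‖². -/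
/-!
Write `b = h(e)` for the stacked means. The update error splits as
`(1 - β)(u - b₀) + Z` with `Z = (h̃(e₁) - h̃(e₀) - (b₁ - b₀)) + β (h̃(e₀) - b₀)`, and `Z` has mean
zero over `(i, ξ)`, so after dropping the projection (nonexpansive towards `b₁ ∈ Ω`) the cross term
vanishes. Then `‖x + y‖² ≤ 2‖x‖² + 2‖y‖²` and "variance ≤ second moment" bound `E‖Z‖²` by
`2 E‖h̃(e₁) - h̃(e₀)‖² + 2β² E‖h̃(e₀)‖²`, and sampling block `i` with weight `1/pᵢ` turns these
second moments into `L(p) ‖e₁ - e₀‖²` and `C(p)`. Finally `(1 - β)² ≤ 1 - β`.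
-/

open MeasureTheory RealInnerProductSpace
open scoped ENNReal

theorem Convex.norm_sub_le_of_forall_norm_sub_le {V : Type*} [NormedAddCommGroup V]
    [InnerProductSpace ℝ V] {S : Set V} (hS : Convex ℝ S) {a q b : V} (hq : q ∈ S)
    (hmin : ∀ c ∈ S, ‖a - q‖ ≤ ‖a - c‖) (hb : b ∈ S) : ‖q - b‖ ≤ ‖a - b‖ := by
  have : Nonempty S := ⟨⟨q, hq⟩⟩
  have hbdd : BddBelow (Set.range fun c : S => ‖a - c‖) :=
    ⟨0, by rintro _ ⟨c, rfl⟩; exact norm_nonneg _⟩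
  have hinf : ‖a - q‖ = ⨅ c : S, ‖a - c‖ :=
    le_antisymm (le_ciInf fun c => hmin c c.2) (ciInf_le hbdd ⟨q, hq⟩)
  have hobtuse : ⟪a - q, b - q⟫ ≤ 0 := (norm_eq_iInf_iff_real_inner_le_zero hS hq).1 hinf b hb
  have hsplit : ‖a - b‖ ^ 2 = ‖a - q‖ ^ 2 - 2 * ⟪a - q, b - q⟫ + ‖b - q‖ ^ 2 := by
    rw [← norm_sub_sq_real, sub_sub_sub_cancel_right]
  rw [norm_sub_rev q b]
  exact (pow_le_pow_iff_left₀ (norm_nonneg _) (norm_nonneg _) two_ne_zero).1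
    (by nlinarith [sq_nonneg ‖a - q‖])

section WeightedMoments

variable {ι W V : Type*} [Fintype ι] [MeasurableSpace W] {μ : Measure W} [NormedAddCommGroup V]
  {p : ι → ℝ}

theorem integral_norm_sq_le_of_forall_norm_le [IsProbabilityMeasure μ] {f : W → V} {c : ℝ}
    (hf : ∀ ω, ‖f ω‖ ≤ c) : ∫ ω, ‖f ω‖ ^ 2 ∂μ ≤ c ^ 2 := by
  calc ∫ ω, ‖f ω‖ ^ 2 ∂μ ≤ ∫ _, c ^ 2 ∂μ :=
        integral_mono_of_nonneg (.of_forall fun _ => sq_nonneg _) (integrable_const _)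
          (.of_forall fun ω => pow_le_pow_left₀ (norm_nonneg _) (hf ω) 2)
    _ = c ^ 2 := by simp

theorem sum_mul_integral_norm_add_sq_le (hp : ∀ i, 0 ≤ p i) {X Y : ι → W → V}
    (hX : ∀ i, MemLp (X i) 2 μ) (hY : ∀ i, MemLp (Y i) 2 μ) :
    ∑ i, p i * ∫ ω, ‖X i ω + Y i ω‖ ^ 2 ∂μ
      ≤ 2 * ∑ i, p i * ∫ ω, ‖X i ω‖ ^ 2 ∂μ + 2 * ∑ i, p i * ∫ ω, ‖Y i ω‖ ^ 2 ∂μ := by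
  simp_rw [Finset.mul_sum, ← Finset.sum_add_distrib]
  refine Finset.sum_le_sum fun i _ => ?_
  have hXi := (hX i).norm.integrable_sq
  have hYi := (hY i).norm.integrable_sq
  have hle : ∫ ω, ‖X i ω + Y i ω‖ ^ 2 ∂μ ≤ ∫ ω, 2 * ‖X i ω‖ ^ 2 + 2 * ‖Y i ω‖ ^ 2 ∂μ :=
    integral_mono_of_nonneg (.of_forall fun _ => sq_nonneg _)
      ((hXi.const_mul 2).add (hYi.const_mul 2)) (.of_forall fun ω =>
        (pow_le_pow_left₀ (norm_nonneg _) (norm_add_le _ _) 2).trans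
          ((add_sq_le).trans_eq (mul_add _ _ _)))
  rw [integral_add (hXi.const_mul 2) (hYi.const_mul 2), integral_const_mul,
    integral_const_mul] at hle
  nlinarith [hp i]

theorem sum_smul_integral_add [NormedSpace ℝ V] {X Y : ι → W → V}
    (hX : ∀ i, Integrable (X i) μ) (hY : ∀ i, Integrable (Y i) μ) :
    ∑ i, p i • ∫ ω, (X i ω + Y i ω) ∂μ
      = ∑ i, p i • ∫ ω, X i ω ∂μ + ∑ i, p i • ∫ ω, Y i ω ∂μ := by
  simp_rw [integral_add (hX _) (hY _), smul_add, Finset.sum_add_distrib]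

theorem sum_smul_integral_sub [NormedSpace ℝ V] {X Y : ι → W → V}
    (hX : ∀ i, Integrable (X i) μ) (hY : ∀ i, Integrable (Y i) μ) :
    ∑ i, p i • ∫ ω, (X i ω - Y i ω) ∂μ
      = ∑ i, p i • ∫ ω, X i ω ∂μ - ∑ i, p i • ∫ ω, Y i ω ∂μ := by
  simp_rw [integral_sub (hX _) (hY _), smul_sub, Finset.sum_sub_distrib]

theorem sum_smul_integral_sub_const [NormedSpace ℝ V] [CompleteSpace V] [IsProbabilityMeasure μ]
    (hp : ∑ i, p i = 1) {X : ι → W → V} (hX : ∀ i, Integrable (X i) μ) (c : V) :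
    ∑ i, p i • ∫ ω, (X i ω - c) ∂μ = ∑ i, p i • ∫ ω, X i ω ∂μ - c := by
  have hmean : ∀ i, ∫ ω, (X i ω - c) ∂μ = ∫ ω, X i ω ∂μ - c := fun i => by
    rw [integral_sub (hX i) (integrable_const c), integral_const, probReal_univ, one_smul]
  simp_rw [hmean, smul_sub, Finset.sum_sub_distrib, ← Finset.sum_smul, hp, one_smul]

variable [InnerProductSpace ℝ V] [CompleteSpace V] [IsProbabilityMeasure μ]

theorem integral_norm_add_sq (a : V) {f : W → V} (hf : MemLp f 2 μ) :
    ∫ ω, ‖a + f ω‖ ^ 2 ∂μ = ‖a‖ ^ 2 + 2 * ⟪a, ∫ ω, f ω ∂μ⟫ + ∫ ω, ‖f ω‖ ^ 2 ∂μ := by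
  have hf1 : Integrable f μ := hf.integrable one_le_two
  have hinner : Integrable (fun ω => 2 * ⟪a, f ω⟫) μ := (hf1.const_inner a).const_mul 2
  simp_rw [norm_add_sq_real]
  rw [integral_add (f := fun ω => ‖a‖ ^ 2 + 2 * ⟪a, f ω⟫) ((integrable_const _).add hinner)
    hf.norm.integrable_sq, integral_add (integrable_const _) hinner, integral_const_mul,
    integral_inner hf1]
  simp

theorem sum_mul_integral_norm_add_sq (hp : ∑ i, p i = 1) (a : V) {X : ι → W → V}
    (hX : ∀ i, MemLp (X i) 2 μ) :
    ∑ i, p i * ∫ ω, ‖a + X i ω‖ ^ 2 ∂μ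
      = ‖a‖ ^ 2 + 2 * ⟪a, ∑ i, p i • ∫ ω, X i ω ∂μ⟫ + ∑ i, p i * ∫ ω, ‖X i ω‖ ^ 2 ∂μ := by
  simp_rw [integral_norm_add_sq a (hX _), inner_sum, real_inner_smul_right, mul_add,
    Finset.sum_add_distrib, ← Finset.sum_mul, hp, Finset.mul_sum]
  ring_nf

theorem sum_mul_integral_norm_sub_sq_le (hp : ∑ i, p i = 1) {X : ι → W → V}
    (hX : ∀ i, MemLp (X i) 2 μ) {c : V} (hc : ∑ i, p i • ∫ ω, X i ω ∂μ = c) :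
    ∑ i, p i * ∫ ω, ‖X i ω - c‖ ^ 2 ∂μ ≤ ∑ i, p i * ∫ ω, ‖X i ω‖ ^ 2 ∂μ := by
  have h := sum_mul_integral_norm_add_sq hp (-c) hX
  simp_rw [neg_add_eq_sub] at h
  rw [h, hc, inner_neg_left, real_inner_self_eq_norm_sq, norm_neg]
  nlinarith [sq_nonneg ‖c‖]

theorem sum_smul_integral_storm_noise (hp : ∑ i, p i = 1) (β : ℝ) {T₀ T₁ : ι → W → V}
    (hT₀ : ∀ i, Integrable (T₀ i) μ) (hT₁ : ∀ i, Integrable (T₁ i) μ) {b₀ b₁ : V}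
    (hb₀ : ∑ i, p i • ∫ ω, T₀ i ω ∂μ = b₀) (hb₁ : ∑ i, p i • ∫ ω, T₁ i ω ∂μ = b₁) :
    ∑ i, p i • ∫ ω, (T₁ i ω - T₀ i ω - (b₁ - b₀) + β • (T₀ i ω - b₀)) ∂μ = 0 := by
  have hdrift : ∑ i, p i • ∫ ω, (T₁ i ω - T₀ i ω - (b₁ - b₀)) ∂μ = 0 := by
    rw [sum_smul_integral_sub_const hp (X := fun i ω => T₁ i ω - T₀ i ω)
      fun i => (hT₁ i).sub (hT₀ i), sum_smul_integral_sub hT₁ hT₀,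
      hb₀, hb₁, sub_self]
  have hnoise : ∑ i, p i • ∫ ω, β • (T₀ i ω - b₀) ∂μ = 0 := by
    simp_rw [integral_smul, smul_comm (p _) β, ← Finset.smul_sum]
    rw [sum_smul_integral_sub_const hp hT₀, hb₀, sub_self, smul_zero]
  rw [sum_smul_integral_add (X := fun i ω => T₁ i ω - T₀ i ω - (b₁ - b₀))
    (Y := fun i ω => β • (T₀ i ω - b₀)) (fun i => (hT₁ i).sub (hT₀ i) |>.sub (integrable_const _))
    (fun i => ((hT₀ i).sub (integrable_const _)).smul β), hdrift, hnoise, add_zero]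

theorem sum_mul_integral_norm_storm_noise_sq_le (hp0 : ∀ i, 0 ≤ p i) (hp : ∑ i, p i = 1)
    (β : ℝ) {T₀ T₁ : ι → W → V} (hT₀ : ∀ i, MemLp (T₀ i) 2 μ) (hT₁ : ∀ i, MemLp (T₁ i) 2 μ)
    {b₀ b₁ : V} (hb₀ : ∑ i, p i • ∫ ω, T₀ i ω ∂μ = b₀)
    (hb₁ : ∑ i, p i • ∫ ω, T₁ i ω ∂μ = b₁) :
    ∑ i, p i * ∫ ω, ‖T₁ i ω - T₀ i ω - (b₁ - b₀) + β • (T₀ i ω - b₀)‖ ^ 2 ∂μ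
      ≤ 2 * β ^ 2 * ∑ i, p i * ∫ ω, ‖T₀ i ω‖ ^ 2 ∂μ
        + 2 * ∑ i, p i * ∫ ω, ‖T₁ i ω - T₀ i ω‖ ^ 2 ∂μ := by
  have hΔ : ∀ i, MemLp (fun ω => T₁ i ω - T₀ i ω) 2 μ := fun i => (hT₁ i).sub (hT₀ i)
  have hmeanΔ : ∑ i, p i • ∫ ω, (T₁ i ω - T₀ i ω) ∂μ = b₁ - b₀ := by
    rw [sum_smul_integral_sub (fun i => (hT₁ i).integrable one_le_two)
      (fun i => (hT₀ i).integrable one_le_two), hb₀, hb₁]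
  have hdrift := sum_mul_integral_norm_sub_sq_le hp hΔ hmeanΔ
  have hnoise : ∑ i, p i * ∫ ω, ‖β • (T₀ i ω - b₀)‖ ^ 2 ∂μ
      ≤ β ^ 2 * ∑ i, p i * ∫ ω, ‖T₀ i ω‖ ^ 2 ∂μ := by
    simp_rw [norm_smul, mul_pow, integral_const_mul, Real.norm_eq_abs, sq_abs,
      mul_left_comm (p _), ← Finset.mul_sum]
    exact mul_le_mul_of_nonneg_left (sum_mul_integral_norm_sub_sq_le hp hT₀ hb₀) (sq_nonneg β)
  have hsplit := sum_mul_integral_norm_add_sq_le hp0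
    (X := fun i ω => T₁ i ω - T₀ i ω - (b₁ - b₀)) (Y := fun i ω => β • (T₀ i ω - b₀))
    (fun i => (hΔ i).sub (memLp_const _)) (fun i => ((hT₀ i).sub (memLp_const _)).const_smul β)
  linarith

theorem storm_step_sq_bound (hp0 : ∀ i, 0 ≤ p i) (hp : ∑ i, p i = 1) {β : ℝ} (hβ0 : 0 ≤ β)
    (hβ1 : β ≤ 1) {S : Set V} (hS : Convex ℝ S) {P : V → V}
    (hP : ∀ a, P a ∈ S ∧ ∀ b ∈ S, ‖a - P a‖ ≤ ‖a - b‖) {T₀ T₁ : ι → W → V}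
    (hT₀ : ∀ i, MemLp (T₀ i) 2 μ) (hT₁ : ∀ i, MemLp (T₁ i) 2 μ) {b₀ b₁ : V}
    (hb₀ : ∑ i, p i • ∫ ω, T₀ i ω ∂μ = b₀) (hb₁ : ∑ i, p i • ∫ ω, T₁ i ω ∂μ = b₁)
    (hb₁S : b₁ ∈ S) (u : V) :
    ∑ i, p i * ∫ ω, ‖P ((1 - β) • (u - T₀ i ω) + T₁ i ω) - b₁‖ ^ 2 ∂μ
      ≤ (1 - β) * ‖u - b₀‖ ^ 2 + 2 * β ^ 2 * ∑ i, p i * ∫ ω, ‖T₀ i ω‖ ^ 2 ∂μ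
        + 2 * ∑ i, p i * ∫ ω, ‖T₁ i ω - T₀ i ω‖ ^ 2 ∂μ := by
  set a := (1 - β) • (u - b₀)
  have hZ : ∀ i, MemLp (fun ω => T₁ i ω - T₀ i ω - (b₁ - b₀) + β • (T₀ i ω - b₀)) 2 μ :=
    fun i => ((hT₁ i).sub (hT₀ i) |>.sub (memLp_const _)).add
      (((hT₀ i).sub (memLp_const _)).const_smul β)
  have ha : ‖a‖ ^ 2 ≤ (1 - β) * ‖u - b₀‖ ^ 2 := by
    rw [norm_smul, mul_pow, Real.norm_of_nonneg (sub_nonneg.2 hβ1)]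
    exact mul_le_mul_of_nonneg_right (by nlinarith) (sq_nonneg _)
  calc ∑ i, p i * ∫ ω, ‖P ((1 - β) • (u - T₀ i ω) + T₁ i ω) - b₁‖ ^ 2 ∂μ
      ≤ ∑ i, p i * ∫ ω, ‖a + (T₁ i ω - T₀ i ω - (b₁ - b₀) + β • (T₀ i ω - b₀))‖ ^ 2 ∂μ := by
        refine Finset.sum_le_sum fun i _ => mul_le_mul_of_nonneg_left ?_ (hp0 i)
        refine integral_mono_of_nonneg (.of_forall fun _ => sq_nonneg _)
          ((memLp_const a).add (hZ i)).norm.integrable_sq (.of_forall fun ω => ?_)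
        have hsplit : (1 - β) • (u - T₀ i ω) + T₁ i ω - b₁
            = a + (T₁ i ω - T₀ i ω - (b₁ - b₀) + β • (T₀ i ω - b₀)) := by
          simp only [a]; module
        dsimp only
        rw [← hsplit]
        exact pow_le_pow_left₀ (norm_nonneg _)
          (hS.norm_sub_le_of_forall_norm_sub_le (hP _).1 (hP _).2 hb₁S) 2
    _ = ‖a‖ ^ 2 + ∑ i, p i * ∫ ω, ‖T₁ i ω - T₀ i ω - (b₁ - b₀) + β • (T₀ i ω - b₀)‖ ^ 2 ∂μ := by
        rw [sum_mul_integral_norm_add_sq hp a hZ, sum_smul_integral_storm_noise hp β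
          (fun i => (hT₀ i).integrable one_le_two) (fun i => (hT₁ i).integrable one_le_two) hb₀
          hb₁, inner_zero_right]
        ring
    _ ≤ _ := by linarith [sum_mul_integral_norm_storm_noise_sq_le hp0 hp β hT₀ hT₁ hb₀ hb₁]

end WeightedMoments

section CoordinateSampling

variable {ι W F : Type*} [Fintype ι] [DecidableEq ι] [MeasurableSpace W] {μ : Measure W}
  [NormedAddCommGroup F]

theorem MeasureTheory.MemLp.piLp_single {q : ℝ≥0∞} (i : ι) {f : W → F} (hf : MemLp f q μ) :
    MemLp (fun ω => (PiLp.single 2 i (f ω) : PiLp 2 fun _ : ι => F)) q μ := by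
  refine MemLp.of_eval_piLp fun j => ?_
  by_cases hj : j = i
  · subst hj; simp [hf]
  · simp [hj]

theorem PiLp.sum_single (x : ι → F) :
    ∑ i, (PiLp.single 2 i (x i) : PiLp 2 fun _ : ι => F) = WithLp.toLp 2 x := by
  ext j
  simp [WithLp.ofLp_sum, Pi.single_apply]

variable [NormedSpace ℝ F]

theorem sum_mul_integral_norm_single_inv_smul_sq_le {p : ι → ℝ} (hp : ∀ i, 0 < p i)
    {X : ι → W → F} {c : ι → ℝ} (hX : ∀ i, ∫ ω, ‖X i ω‖ ^ 2 ∂μ ≤ c i) :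
    ∑ i, p i * ∫ ω, ‖(PiLp.single 2 i ((p i)⁻¹ • X i ω) : PiLp 2 fun _ : ι => F)‖ ^ 2 ∂μ
      ≤ ∑ i, c i / p i := by
  refine Finset.sum_le_sum fun i _ => ?_
  simp_rw [PiLp.norm_single, norm_smul, mul_pow, integral_const_mul, norm_inv, Real.norm_eq_abs,
    inv_pow, sq_abs]
  calc p i * ((p i ^ 2)⁻¹ * ∫ ω, ‖X i ω‖ ^ 2 ∂μ) = (∫ ω, ‖X i ω‖ ^ 2 ∂μ) / p i := by
        field_simp [(hp i).ne']
    _ ≤ c i / p i := div_le_div_of_nonneg_right (hX i) (hp i).le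

variable [CompleteSpace F]

theorem integral_piLp_single (i : ι) {f : W → F} (hf : Integrable f μ) :
    ∫ ω, (PiLp.single 2 i (f ω) : PiLp 2 fun _ : ι => F) ∂μ = PiLp.single 2 i (∫ ω, f ω ∂μ) := by
  ext j
  rw [eval_integral_piLp (memLp_one_iff_integrable.1
    ((memLp_one_iff_integrable.2 hf).piLp_single i)).eval_piLp]
  by_cases hj : j = i
  · subst hj; simp
  · simp [hj]

theorem sum_smul_integral_single_inv_smul {p : ι → ℝ} (hp : ∀ i, p i ≠ 0) {X : ι → W → F}
    (hX : ∀ i, Integrable (X i) μ) :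
    ∑ i, p i • ∫ ω, (PiLp.single 2 i ((p i)⁻¹ • X i ω) : PiLp 2 fun _ : ι => F) ∂μ
      = WithLp.toLp 2 fun i => ∫ ω, X i ω ∂μ := by
  have hterm : ∀ i, p i • ∫ ω, (PiLp.single 2 i ((p i)⁻¹ • X i ω) : PiLp 2 fun _ : ι => F) ∂μ
      = PiLp.single 2 i (∫ ω, X i ω ∂μ) := fun i => by
    rw [integral_piLp_single i (f := fun ω => (p i)⁻¹ • X i ω) ((hX i).smul _), integral_smul]
    ext j
    by_cases hj : j = i
    · subst hj; simp [hp j]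
    · simp [hj]
  simp_rw [hterm, PiLp.sum_single]

end CoordinateSampling

theorem stmt19_general {E F W : Type*} [NormedAddCommGroup E]
    [NormedAddCommGroup F] [InnerProductSpace ℝ F] [CompleteSpace F]
    [MeasurableSpace W] (μ : Measure W) [IsProbabilityMeasure μ]
    (m : ℕ) (p : Fin m → ℝ) (hp : ∀ i, 0 < p i) (hpsum : ∑ i, p i = 1)
    (h : Fin m → E → F) (H : Fin m → E → W → F) (C L : Fin m → ℝ) (β : ℝ)
    (hβ0 : 0 ≤ β) (hβ1 : β ≤ 1)
    (hmem : ∀ i e, MemLp (H i e) 2 μ)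
    (hunb : ∀ i e, ∫ ω, H i e ω ∂μ = h i e)
    (hC : ∀ i e, ∫ ω, ‖H i e ω‖ ^ 2 ∂μ ≤ C i ^ 2)
    (hlip : ∀ i ω e e', ‖H i e ω - H i e' ω‖ ≤ L i * ‖e - e'‖)
    (hstack : E → PiLp 2 (fun _ : Fin m => F))
    (hhstack : ∀ e j, hstack e j = h j e)
    (S : Set (PiLp 2 (fun _ : Fin m => F))) (hSconv : Convex ℝ S)
    (hhS : ∀ e, hstack e ∈ S)
    (P : PiLp 2 (fun _ : Fin m => F) → PiLp 2 (fun _ : Fin m => F))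
    (hP : ∀ a, P a ∈ S ∧ ∀ b ∈ S, ‖a - P a‖ ≤ ‖a - b‖)
    (tilde : Fin m → E → W → PiLp 2 (fun _ : Fin m => F))
    (htilde : ∀ i e ω j, tilde i e ω j = if j = i then (p i)⁻¹ • H i e ω else 0)
    (u : PiLp 2 (fun _ : Fin m => F)) (e₀ e₁ : E) :
    ∑ i, p i * ∫ ω, ‖P ((1 - β) • (u - tilde i e₀ ω) + tilde i e₁ ω) - hstack e₁‖ ^ 2 ∂μ
      ≤ (1 - β) * ‖u - hstack e₀‖ ^ 2
        + 2 * β ^ 2 * (∑ i, C i ^ 2 / p i)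
        + 2 * (∑ i, L i ^ 2 / p i) * ‖e₁ - e₀‖ ^ 2 := by
  obtain rfl : h = fun i e => ∫ ω, H i e ω ∂μ := funext₂ fun i e => (hunb i e).symm
  obtain rfl : hstack = fun e => WithLp.toLp 2 fun j => ∫ ω, H j e ω ∂μ :=
    funext fun e => PiLp.ext (hhstack e)
  obtain rfl : tilde = fun i e ω => PiLp.single 2 i ((p i)⁻¹ • H i e ω) := by
    funext i e ω; ext j; rw [htilde]; by_cases hj : j = i <;> simp [hj]
  have hp0 : ∀ i, p i ≠ 0 := fun i => (hp i).ne'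
  have hstep := storm_step_sq_bound (fun i => (hp i).le) hpsum hβ0 hβ1 hSconv hP
    (T₀ := fun i ω => PiLp.single 2 i ((p i)⁻¹ • H i e₀ ω))
    (T₁ := fun i ω => PiLp.single 2 i ((p i)⁻¹ • H i e₁ ω))
    (fun i => ((hmem i e₀).const_smul _).piLp_single i)
    (fun i => ((hmem i e₁).const_smul _).piLp_single i)
    (sum_smul_integral_single_inv_smul hp0 fun i => (hmem i e₀).integrable one_le_two)
    (sum_smul_integral_single_inv_smul hp0 fun i => (hmem i e₁).integrable one_le_two)
    (hhS e₁) u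
  have hvar := sum_mul_integral_norm_single_inv_smul_sq_le (μ := μ) hp (X := fun i => H i e₀)
    fun i => hC i e₀
  have hdrift := sum_mul_integral_norm_single_inv_smul_sq_le (μ := μ) hp
    (X := fun i ω => H i e₁ ω - H i e₀ ω) (c := fun i => L i ^ 2 * ‖e₁ - e₀‖ ^ 2)
    fun i => (integral_norm_sq_le_of_forall_norm_le (hlip i · e₁ e₀)).trans_eq (mul_pow _ _ _)
  simp_rw [smul_sub, PiLp.single_sub, mul_div_right_comm _ (‖e₁ - e₀‖ ^ 2),
    ← Finset.sum_mul] at hdrift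
  refine hstep.trans ?_
  nlinarith [mul_le_mul_of_nonneg_left hvar (sq_nonneg β)]

/-- Second claim of Lemma 9: one step of the projected randomized-coordinate STORM update
satisfies `E_{ξ,i}[δ_t] ≤ (1-β)δ_{t-1} + 2β²C(p) + 2L(p)‖e_t - e_{t-1}‖²`, where
`C(p) = Σᵢ Cᵢ²/pᵢ`, `L(p) = Σᵢ Lᵢ²/pᵢ`, expectation over the index being the `p`-weighted
sum. -/
theorem stmt19 {E F W : Type*} [NormedAddCommGroup E]
    [NormedAddCommGroup F] [InnerProductSpace ℝ F] [CompleteSpace F]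
    [MeasurableSpace W] (μ : Measure W) [IsProbabilityMeasure μ]
    (m : ℕ) (p : Fin m → ℝ) (hp : ∀ i, 0 < p i) (hpsum : ∑ i, p i = 1)
    (h : Fin m → E → F) (H : Fin m → E → W → F) (C L : Fin m → ℝ) (β : ℝ)
    (hβ0 : 0 ≤ β) (hβ1 : β ≤ 1)
    (hmem : ∀ i e, MemLp (H i e) 2 μ)
    (hunb : ∀ i e, ∫ ω, H i e ω ∂μ = h i e)
    (hC : ∀ i e, ∫ ω, ‖H i e ω‖ ^ 2 ∂μ ≤ C i ^ 2)
    (hlip : ∀ i ω e e', ‖H i e ω - H i e' ω‖ ≤ L i * ‖e - e'‖)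
    (hstack : E → PiLp 2 (fun _ : Fin m => F))
    (hhstack : ∀ e j, hstack e j = h j e)
    (S : Set (PiLp 2 (fun _ : Fin m => F))) (hSconv : Convex ℝ S) (hSclosed : IsClosed S)
    (hhS : ∀ e, hstack e ∈ S)
    (P : PiLp 2 (fun _ : Fin m => F) → PiLp 2 (fun _ : Fin m => F))
    (hP : ∀ a, P a ∈ S ∧ ∀ b ∈ S, ‖a - P a‖ ≤ ‖a - b‖)
    (tilde : Fin m → E → W → PiLp 2 (fun _ : Fin m => F))
    (htilde : ∀ i e ω j, tilde i e ω j = if j = i then (p i)⁻¹ • H i e ω else 0)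
    (u : PiLp 2 (fun _ : Fin m => F)) (e₀ e₁ : E) :
    ∑ i, p i * ∫ ω, ‖P ((1 - β) • (u - tilde i e₀ ω) + tilde i e₁ ω) - hstack e₁‖ ^ 2 ∂μ
      ≤ (1 - β) * ‖u - hstack e₀‖ ^ 2
        + 2 * β ^ 2 * (∑ i, C i ^ 2 / p i)
        + 2 * (∑ i, L i ^ 2 / p i) * ‖e₁ - e₀‖ ^ 2 :=
  stmt19_general μ m p hp hpsum h H C L β hβ0 hβ1 hmem hunb hC hlip hstack hhstack S hSconv hhS P hP
    tilde htilde u e₀ e₁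
end
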